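/- Repeated application of the Casimir operator 𝒟 = (1−z)² z ∂_z² + (1−z)² ∂_z to the power function z^a gives 𝒟ⁿ z^a = (a−n+1)ₙ² z^{a−n} (1 + O(z)) as z → 0; in particular the coefficient of the leading power z^{a−n} in 𝒟ⁿ z^a is the square of the Pochhammer symbol (a−n+1)ₙ = Γ(a+1)/Γ(a−n+1). -/

import Mathlib

open Polynomial Asymptotics

/-- The SL(2,ℝ) Casimir operator `𝒟 = (1-z)² z ∂_z² + (1-z)² ∂_z`. -/
noncomputable def casimirD (f : ℝ → ℝ) : ℝ → ℝ :=
  fun z => (1 - z) ^ 2 * z * deriv (deriv f) z + (1 - z) ^ 2 * deriv f z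

/-!
Since `z f'' + f' = (z f')'`, we have `𝒟 = (1-z)² ∂_z z ∂_z`, and on `z > 0` the operator
`∂_z z ∂_z` sends `z^b P(z)`, for a polynomial `P`, to `z^(b-1) (θ_b² P)(z)` with
`θ_b P = b P + z P'`. Hence `𝒟ⁿ z^a = z^(a-n) Pₙ(z)` for polynomials `Pₙ` with
`Pₙ₊₁ = (1-z)² θ_{a-n}² Pₙ`, and evaluating at `z = 0` gives
`Pₙ₊₁(0) = (a-n)² Pₙ(0)`, whose solution is the squared Pochhammer symbol.
-/

open Topology

theorem ascPochhammer_succ_eval_left {S : Type*} [CommSemiring S] (n : ℕ) (x : S) :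
    (ascPochhammer S (n + 1)).eval x = x * (ascPochhammer S n).eval (x + 1) := by
  rw [ascPochhammer_succ_left, eval_mul, eval_X, eval_comp, eval_add, eval_X, eval_one]

namespace Casimir

/-- The twisted Euler operator `θ_b P = b P + X P'`, i.e. `z^(1-b) · (z^b P)'`. -/
noncomputable def twistedEuler (b : ℝ) (P : ℝ[X]) : ℝ[X] := C b * P + X * derivative P

theorem coeff_zero_twistedEuler (b : ℝ) (P : ℝ[X]) :
    (twistedEuler b P).coeff 0 = b * P.coeff 0 := by
  simp [twistedEuler]

theorem hasDerivAt_rpow_mul_eval (b : ℝ) (P : ℝ[X]) {z : ℝ} (hz : z ≠ 0) :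
    HasDerivAt (fun w => w ^ b * P.eval w) (z ^ (b - 1) * (twistedEuler b P).eval z) z := by
  refine ((Real.hasDerivAt_rpow_const (p := b) (Or.inl hz)).mul (P.hasDerivAt z)).congr_deriv ?_
  have hzb : z ^ b = z ^ (b - 1) * z := by rw [← Real.rpow_add_one hz, sub_add_cancel]
  simp only [twistedEuler, eval_add, eval_mul, eval_C, eval_X, hzb]
  ring

theorem deriv_rpow_mul_eval_eqOn (b : ℝ) (P : ℝ[X]) :
    Set.EqOn (deriv fun w => w ^ b * P.eval w) (fun w => w ^ (b - 1) * (twistedEuler b P).eval w)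
      (Set.Ioi 0) :=
  fun _ hz => (hasDerivAt_rpow_mul_eval b P (ne_of_gt hz)).deriv

theorem casimirD_congr {f g : ℝ → ℝ} {z : ℝ} (h : f =ᶠ[𝓝 z] g) :
    casimirD f z = casimirD g z := by
  simp only [casimirD, h.deriv_eq, h.deriv.deriv_eq]

noncomputable def casimirPoly (b : ℝ) (P : ℝ[X]) : ℝ[X] :=
  (1 - X) ^ 2 * twistedEuler b (twistedEuler b P)

theorem coeff_zero_casimirPoly (b : ℝ) (P : ℝ[X]) :
    (casimirPoly b P).coeff 0 = b ^ 2 * P.coeff 0 := by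
  rw [casimirPoly, mul_coeff_zero, coeff_zero_twistedEuler, coeff_zero_twistedEuler,
    coeff_zero_eq_eval_zero ((1 - X) ^ 2)]
  simp only [eval_pow, eval_sub, eval_one, eval_X]
  ring

theorem casimirD_rpow_mul_eval (b : ℝ) (P : ℝ[X]) {z : ℝ} (hz : 0 < z) :
    casimirD (fun w => w ^ b * P.eval w) z = z ^ (b - 1) * (casimirPoly b P).eval z := by
  set Q := twistedEuler b P
  have hderiv2 : deriv (deriv fun w => w ^ b * P.eval w) z =
      z ^ (b - 1 - 1) * (twistedEuler (b - 1) Q).eval z := by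
    rw [((deriv_rpow_mul_eval_eqOn b P).eventuallyEq_of_mem (Ioi_mem_nhds hz)).deriv_eq]
    exact (hasDerivAt_rpow_mul_eval (b - 1) Q hz.ne').deriv
  have hzb : z ^ (b - 1) = z ^ (b - 1 - 1) * z := by
    rw [← Real.rpow_add_one hz.ne', sub_add_cancel]
  rw [casimirD, hderiv2, deriv_rpow_mul_eval_eqOn b P hz]
  simp only [casimirPoly, twistedEuler, Q, eval_add, eval_mul, eval_C, eval_X, eval_pow, eval_sub,
    eval_one, derivative_add, derivative_mul, derivative_C, derivative_X, hzb]
  ring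

noncomputable def iteratePoly (a : ℝ) : ℕ → ℝ[X]
  | 0 => 1
  | n + 1 => casimirPoly (a - n) (iteratePoly a n)

theorem coeff_zero_iteratePoly (a : ℝ) (n : ℕ) :
    (iteratePoly a n).coeff 0 = (ascPochhammer ℝ n).eval (a - n + 1) ^ 2 := by
  induction n with
  | zero => simp [iteratePoly]
  | succ n ih =>
    rw [iteratePoly, coeff_zero_casimirPoly, ih, ascPochhammer_succ_eval_left]
    push_cast
    ring_nf

theorem casimirD_iterate_rpow_eqOn (a : ℝ) (n : ℕ) :
    Set.EqOn (casimirD^[n] fun w => w ^ a) (fun z => z ^ (a - n) * (iteratePoly a n).eval z)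
      (Set.Ioi 0) := by
  induction n with
  | zero => intro z _; simp [iteratePoly]
  | succ n ih =>
    intro z hz
    rw [Function.iterate_succ_apply', casimirD_congr (ih.eventuallyEq_of_mem (Ioi_mem_nhds hz)),
      casimirD_rpow_mul_eval _ _ hz, iteratePoly, Nat.cast_succ, sub_add_eq_sub_sub]

end Casimir

theorem isBigO_rpow_mul_eval_sub_coeff_zero (c : ℝ) (P : ℝ[X]) :
    (fun z => z ^ c * P.eval z - P.coeff 0 * z ^ c) =O[𝓝[>] 0] fun z => z ^ (c + 1) := by
  have hdivX : (fun z => z ^ c * P.eval z - P.coeff 0 * z ^ c) =ᶠ[𝓝[>] 0]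
      fun z => z ^ (c + 1) * P.divX.eval z := by
    filter_upwards [self_mem_nhdsWithin] with z (hz : 0 < z)
    have h := congrArg (eval z) (X_mul_divX_add P)
    rw [eval_add, eval_mul, eval_X, eval_C] at h
    rw [← h, Real.rpow_add_one hz.ne']
    ring
  have hbounded : (fun z => P.divX.eval z) =O[𝓝[>] 0] fun _ => (1 : ℝ) :=
    (P.divX.continuous.tendsto 0).mono_left nhdsWithin_le_nhds |>.isBigO_one ℝ
  refine hdivX.trans_isBigO ?_
  simpa using (isBigO_refl (fun z : ℝ => z ^ (c + 1)) _).mul hbounded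

/-- `𝒟ⁿ z^a = ((a-n+1)ₙ)² z^{a-n} (1 + O(z))` as `z → 0⁺`. -/
theorem casimirD_iterate_rpow (a : ℝ) (n : ℕ) :
    (fun z : ℝ => (casimirD^[n] (fun w => w ^ a)) z -
        ((ascPochhammer ℝ n).eval (a - n + 1)) ^ 2 * z ^ (a - n))
      =O[nhdsWithin 0 (Set.Ioi 0)] fun z : ℝ => z ^ (a - n + 1) := by
  have hpoly : (casimirD^[n] fun w => w ^ a) =ᶠ[𝓝[>] 0]
      fun z => z ^ (a - n) * (Casimir.iteratePoly a n).eval z :=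
    (Casimir.casimirD_iterate_rpow_eqOn a n).eventuallyEq_of_mem self_mem_nhdsWithin
  rw [← Casimir.coeff_zero_iteratePoly]
  exact (isBigO_rpow_mul_eval_sub_coeff_zero _ _).congr'
    (hpoly.symm.sub (Filter.EventuallyEq.refl _ _)) (Filter.EventuallyEq.refl _ _)
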